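/- arXiv:1309.1987 — 4 statements merged into one kernel-verified Lean document; each statement's English description precedes it below -/
import Mathlib

section
/- For every positive integer N there exist a positive integer r with r ≤ 1 + log_φ N (where φ = (1+√5)/2) and coefficients b_1 ∈ {1,2,3}, b_i ∈ {1,2} for 2 ≤ i ≤ r, such that N = Σ_{i=1}^r b_i F_i, where F_i is the i-th Fibonacci number with F_0 = F_1 = 1. -/
/-- Fibonacci numbers with `F 0 = F 1 = 1`. -/
def F (i : ℕ) : ℕ := Nat.fib (i + 1)

noncomputable def phi : ℝ := (1 + Real.sqrt 5) / 2

/-!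
Take `r` maximal with `S r = F 1 + ⋯ + F r ≤ N`. Since each `F (n + 1)` is at most `1 + S n`,
every number up to `S r` is a sum of distinct `F i` with `1 ≤ i ≤ r`, and by maximality
`N - S r < F (r + 1) ≤ 1 + S r`. Adding such a representation of `N - S r` to `S r` gives
coefficients in `{1, 2}`. Finally `φ ^ (r - 1) ≤ F r ≤ S r ≤ N` bounds `r`.
-/

open Finset

/-- Brown's criterion for complete sequences. -/
theorem exists_subset_sum_eq_of_le_one_add_sum {f : ℕ → ℕ}
    (hf : ∀ n, f (n + 1) ≤ 1 + ∑ i ∈ Icc 1 n, f i) :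
    ∀ {r D : ℕ}, D ≤ ∑ i ∈ Icc 1 r, f i → ∃ s ⊆ Icc 1 r, D = ∑ i ∈ s, f i
  | 0, D, hD => ⟨∅, empty_subset _, by simpa using hD⟩
  | r + 1, D, hD => by
    rw [sum_Icc_succ_top (by omega)] at hD
    by_cases hlarge : f (r + 1) ≤ D
    · obtain ⟨s, hs, hsum⟩ :=
        exists_subset_sum_eq_of_le_one_add_sum hf (r := r) (D := D - f (r + 1)) (by omega)
      have hr : r + 1 ∉ s := fun h => by simpa using hs h
      refine ⟨insert (r + 1) s, insert_subset (by simp) (hs.trans ?_), ?_⟩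
      · exact Icc_subset_Icc_right (by omega)
      · rw [sum_insert hr, ← hsum]
        omega
    · obtain ⟨s, hs, hsum⟩ :=
        exists_subset_sum_eq_of_le_one_add_sum hf (r := r) (D := D) (by have := hf r; omega)
      exact ⟨s, hs.trans (Icc_subset_Icc_right (by omega)), hsum⟩

theorem exists_le_and_lt_succ {s : ℕ → ℕ} {N k m : ℕ} (hkm : k ≤ m) (hk : s k ≤ N)
    (hm : N < s m) : ∃ r, k ≤ r ∧ s r ≤ N ∧ N < s (r + 1) := by
  set r := Nat.findGreatest (fun n => s n ≤ N) m
  have hr : s r ≤ N := Nat.findGreatest_spec (P := fun n => s n ≤ N) hkm hk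
  have hrm : r < m := (Nat.findGreatest_le m).lt_of_ne fun h : r = m => by rw [h] at hr; omega
  exact ⟨r, Nat.le_findGreatest hkm hk, hr,
    not_le.1 (Nat.findGreatest_is_greatest (P := fun n => s n ≤ N) r.lt_succ_self hrm)⟩

theorem Real.goldenRatio_pow_le_fib_add_two : ∀ n : ℕ, Real.goldenRatio ^ n ≤ Nat.fib (n + 2)
  | 0 => by simp
  | 1 => by norm_num [Nat.fib_add_two, Real.goldenRatio_lt_two.le]
  | n + 2 => by
    have hrec := Real.goldenRatio_pow_sub_goldenRatio_pow n
    rw [Nat.fib_add_two, Nat.cast_add]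
    linarith [goldenRatio_pow_le_fib_add_two n, goldenRatio_pow_le_fib_add_two (n + 1)]

lemma F_add_two (n : ℕ) : F (n + 2) = F (n + 1) + F n :=
  (Nat.fib_add_two (n := n + 1)).trans (add_comm _ _)

lemma F_pos (n : ℕ) : 0 < F n := Nat.fib_pos.2 n.succ_pos

lemma F_succ_le_one_add_sum (n : ℕ) : F (n + 1) ≤ 1 + ∑ i ∈ Icc 1 n, F i := by
  induction n with
  | zero => simp [F]
  | succ n ih =>
    have hmono : F n ≤ F (n + 1) := Nat.fib_mono (by omega)
    rw [sum_Icc_succ_top (by omega), F_add_two]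
    omega

lemma natCast_le_one_add_logb_phi {r N : ℕ} (hr : 0 < r) (h : F r ≤ N) :
    (r : ℝ) ≤ 1 + Real.logb phi N := by
  obtain ⟨m, rfl⟩ : ∃ m, r = m + 1 := Nat.exists_eq_succ_of_ne_zero hr.ne'
  have hpow : Real.goldenRatio ^ m ≤ N :=
    (Real.goldenRatio_pow_le_fib_add_two m).trans (by exact_mod_cast h)
  have hlog : (m : ℝ) ≤ Real.logb phi N := by
    rw [phi, ← Real.goldenRatio.eq_def, Real.le_logb_iff_rpow_le Real.one_lt_goldenRatio
      (by exact_mod_cast (F_pos _).trans_le h), Real.rpow_natCast]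
    exact hpow
  push_cast
  linarith

theorem stmt0 (N : ℕ) (hN : 0 < N) :
    ∃ (r : ℕ) (b : ℕ → ℕ), 0 < r ∧ (r : ℝ) ≤ 1 + Real.logb phi N ∧
      b 1 ∈ ({1, 2, 3} : Set ℕ) ∧
      (∀ i, 2 ≤ i → i ≤ r → b i ∈ ({1, 2} : Set ℕ)) ∧
      N = ∑ i ∈ Finset.Icc 1 r, b i * F i := by
  have hN_lt : N < ∑ i ∈ Icc 1 (N + 1), F i :=
    calc N < #(Icc 1 (N + 1)) • 1 := by simp
      _ ≤ _ := card_nsmul_le_sum _ _ 1 fun i _ => F_pos i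
  obtain ⟨r, hr, hSr, hSr_succ⟩ := exists_le_and_lt_succ (s := fun r => ∑ i ∈ Icc 1 r, F i)
    (k := 1) (by omega) (by simp [F]; omega) hN_lt
  rw [sum_Icc_succ_top (by omega)] at hSr_succ
  obtain ⟨s, hs, hsum⟩ := exists_subset_sum_eq_of_le_one_add_sum F_succ_le_one_add_sum
    (r := r) (D := N - ∑ i ∈ Icc 1 r, F i) (by have := F_succ_le_one_add_sum r; omega)
  have hFr : F r ≤ N := (single_le_sum (fun i _ => (F_pos i).le) (by simp; omega)).trans hSr
  refine ⟨r, fun i => if i ∈ s then 2 else 1, hr, natCast_le_one_add_logb_phi hr hFr,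
    by beta_reduce; split_ifs <;> simp, fun i _ _ => by beta_reduce; split_ifs <;> simp, ?_⟩
  have hsplit (i : ℕ) : (if i ∈ s then 2 else 1) * F i = F i + if i ∈ s then F i else 0 := by
    split_ifs <;> ring
  rw [sum_congr rfl fun i _ => hsplit i, sum_add_distrib, sum_ite_mem, inter_eq_right.2 hs, ← hsum]
  omega
end

section
/- Let (ξ_k)_{k≥1} be an arbitrary sequence in [0,1), and let (n_k)_{k≥1} be a sequence of positive reals satisfying inf_k n_{k+1}/(k·n_k) > 0. Then there exist a constant c > 0 and a real number α such that ‖α n_k − ξ_k‖ ≤ c/k for all k ≥ 1, where ‖x‖ denotes the distance from x to the nearest integer. -/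
/-!
Build α as the limit of the greedy approximants: α_k is the point of `(ℤ + ξ_k) / n_k` nearest to
α_{k-1}, so `|α_k - α_{k-1}| ≤ 1 / (2 n_k)`. Once `κ k ≥ 2` the `n_k` at least double, so these
steps decay geometrically and `|α - α_k| ≤ 1 / n_{k+1} ≤ 1 / (κ k n_k)`. Since `α_k n_k - ξ_k` is an
integer, `‖α n_k - ξ_k‖ ≤ |α - α_k| n_k ≤ 1 / (κ k)`.
-/

open Filter Topology

/-- Distance from `x` to the nearest integer. -/
noncomputable def nd (x : ℝ) : ℝ := |x - round x|

lemma nd_le_abs_sub_int (x : ℝ) (m : ℤ) : nd x ≤ |x - m| :=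
  round_le x m

lemma nd_le_half (x : ℝ) : nd x ≤ 1 / 2 :=
  abs_sub_round x

noncomputable def greedyApprox (ξ n : ℕ → ℝ) : ℕ → ℝ
  | 0 => 0
  | j + 1 => (round (greedyApprox ξ n j * n (j + 1) - ξ (j + 1)) + ξ (j + 1)) / n (j + 1)

section greedyApprox

variable {ξ n : ℕ → ℝ} {j : ℕ}

lemma greedyApprox_succ_mul_sub (hn : n (j + 1) ≠ 0) :
    greedyApprox ξ n (j + 1) * n (j + 1) - ξ (j + 1) =
      round (greedyApprox ξ n j * n (j + 1) - ξ (j + 1)) := by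
  rw [greedyApprox, div_mul_cancel₀ _ hn, add_sub_cancel_right]

lemma dist_greedyApprox_succ_le (hn : 0 < n (j + 1)) :
    dist (greedyApprox ξ n j) (greedyApprox ξ n (j + 1)) ≤ 1 / (2 * n (j + 1)) := by
  set x := greedyApprox ξ n j * n (j + 1) - ξ (j + 1)
  have hdiff : greedyApprox ξ n j - greedyApprox ξ n (j + 1) = (x - round x) / n (j + 1) := by
    rw [greedyApprox]
    field_simp
    ring
  calc dist (greedyApprox ξ n j) (greedyApprox ξ n (j + 1)) = |x - round x| / n (j + 1) := by
        rw [Real.dist_eq, hdiff, abs_div, abs_of_pos hn]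
    _ ≤ 1 / 2 / n (j + 1) := by gcongr; exact abs_sub_round x
    _ = 1 / (2 * n (j + 1)) := by ring

lemma nd_mul_sub_le_abs_sub_greedyApprox (hn : n (j + 1) ≠ 0) (α : ℝ) :
    nd (α * n (j + 1) - ξ (j + 1)) ≤ |α - greedyApprox ξ n (j + 1)| * |n (j + 1)| := by
  calc nd (α * n (j + 1) - ξ (j + 1))
      ≤ |α * n (j + 1) - ξ (j + 1) - round (greedyApprox ξ n j * n (j + 1) - ξ (j + 1))| :=
        nd_le_abs_sub_int _ _
    _ = |α - greedyApprox ξ n (j + 1)| * |n (j + 1)| := by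
        rw [← greedyApprox_succ_mul_sub hn, ← abs_mul]
        ring_nf

end greedyApprox

section Doubling

variable {X : Type*} [PseudoMetricSpace X] {u : ℕ → X} {n : ℕ → ℝ} {k : ℕ} {a : X}

lemma pow_two_mul_le_of_doubling (hdouble : ∀ j ≥ k, 2 * n j ≤ n (j + 1)) (i : ℕ) :
    2 ^ i * n k ≤ n (k + i) := by
  induction i with
  | zero => simp
  | succ i ih =>
    calc 2 ^ (i + 1) * n k = 2 * (2 ^ i * n k) := by ring
      _ ≤ 2 * n (k + i) := by gcongr
      _ ≤ n (k + (i + 1)) := hdouble (k + i) (Nat.le_add_right k i)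

lemma dist_succ_le_geometric_two (hpos : 0 < n (k + 1)) (hdouble : ∀ j > k, 2 * n j ≤ n (j + 1))
    (hstep : ∀ j ≥ k, dist (u j) (u (j + 1)) ≤ 1 / (2 * n (j + 1))) (i : ℕ) :
    dist (u (i + k)) (u (i + 1 + k)) ≤ 1 / n (k + 1) / 2 / 2 ^ i := by
  have hgrow : 2 ^ i * n (k + 1) ≤ n (i + 1 + k) := by
    simpa [Nat.add_comm, Nat.add_left_comm] using pow_two_mul_le_of_doubling hdouble i
  calc dist (u (i + k)) (u (i + 1 + k)) ≤ 1 / (2 * n (i + 1 + k)) := by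
        simpa only [Nat.add_right_comm i 1 k] using hstep _ (Nat.le_add_left k i)
    _ ≤ 1 / (2 * (2 ^ i * n (k + 1))) := by gcongr
    _ = 1 / n (k + 1) / 2 / 2 ^ i := by field_simp

lemma cauchySeq_of_dist_succ_le (hpos : 0 < n (k + 1)) (hdouble : ∀ j > k, 2 * n j ≤ n (j + 1))
    (hstep : ∀ j ≥ k, dist (u j) (u (j + 1)) ≤ 1 / (2 * n (j + 1))) : CauchySeq u :=
  (cauchySeq_shift k).mp <|
    cauchySeq_of_le_geometric_two (dist_succ_le_geometric_two hpos hdouble hstep)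

lemma dist_le_of_dist_succ_le (hpos : 0 < n (k + 1)) (hdouble : ∀ j > k, 2 * n j ≤ n (j + 1))
    (hstep : ∀ j ≥ k, dist (u j) (u (j + 1)) ≤ 1 / (2 * n (j + 1)))
    (ha : Tendsto u atTop (𝓝 a)) : dist (u k) a ≤ 1 / n (k + 1) := by
  simpa using dist_le_of_le_geometric_two_of_tendsto₀ (f := fun i ↦ u (i + k))
    (dist_succ_le_geometric_two hpos hdouble hstep) ((tendsto_add_atTop_iff_nat k).mpr ha)

end Doubling

section Growth

variable {ξ n : ℕ → ℝ} {κ : ℝ} {K k : ℕ} {α : ℝ}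

lemma exists_doubling_of_growth (hκ : 0 < κ) (hn : ∀ k, 1 ≤ k → 0 < n k)
    (hgrowth : ∀ k, 1 ≤ k → κ * k * n k ≤ n (k + 1)) :
    ∃ K ≥ 1, ∀ j ≥ K, 2 * n j ≤ n (j + 1) := by
  refine ⟨⌈2 / κ⌉₊ + 1, by omega, fun j hj ↦ ?_⟩
  have hκj : 2 ≤ κ * j := by
    have : 2 / κ ≤ j := (Nat.le_ceil _).trans (by exact_mod_cast by omega)
    rwa [div_le_iff₀ hκ, mul_comm] at this
  have hnj := hn j (by omega)
  calc 2 * n j ≤ κ * j * n j := by gcongr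
    _ ≤ n (j + 1) := hgrowth j (by omega)

lemma exists_tendsto_greedyApprox (hn : ∀ k, 1 ≤ k → 0 < n k)
    (hdouble : ∀ j ≥ K, 2 * n j ≤ n (j + 1)) : ∃ α, Tendsto (greedyApprox ξ n) atTop (𝓝 α) :=
  cauchySeq_tendsto_of_complete <| cauchySeq_of_dist_succ_le (hn (K + 1) (by omega))
    (fun j hj ↦ hdouble j hj.le) fun j _ ↦ dist_greedyApprox_succ_le (hn _ (by omega))

lemma nd_mul_sub_le_div_of_tendsto_greedyApprox (hn : ∀ k, 1 ≤ k → 0 < n k)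
    (hdouble : ∀ j ≥ K, 2 * n j ≤ n (j + 1)) (hα : Tendsto (greedyApprox ξ n) atTop (𝓝 α))
    (hk : 1 ≤ k) (hKk : K ≤ k) : nd (α * n k - ξ k) ≤ n k / n (k + 1) := by
  obtain ⟨j, rfl⟩ : ∃ j, k = j + 1 := ⟨k - 1, by omega⟩
  have hnj := hn (j + 1) hk
  have hclose : |α - greedyApprox ξ n (j + 1)| ≤ 1 / n (j + 1 + 1) := by
    rw [abs_sub_comm, ← Real.dist_eq]
    exact dist_le_of_dist_succ_le (hn _ (by omega)) (fun i hi ↦ hdouble i (by omega))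
      (fun i _ ↦ dist_greedyApprox_succ_le (hn _ (by omega))) hα
  calc nd (α * n (j + 1) - ξ (j + 1)) ≤ |α - greedyApprox ξ n (j + 1)| * |n (j + 1)| :=
        nd_mul_sub_le_abs_sub_greedyApprox hnj.ne' α
    _ ≤ 1 / n (j + 1 + 1) * n (j + 1) := by rw [abs_of_pos hnj]; gcongr
    _ = n (j + 1) / n (j + 1 + 1) := by ring

end Growth

theorem stmt5_general (ξ : ℕ → ℝ)
    (n : ℕ → ℝ) (hn : ∀ k, 1 ≤ k → 0 < n k)
    (hinf : ∃ κ > (0 : ℝ), ∀ k, 1 ≤ k → κ ≤ n (k + 1) / (k * n k)) :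
    ∃ c > (0 : ℝ), ∃ α : ℝ, ∀ k, 1 ≤ k → nd (α * n k - ξ k) ≤ c / k := by
  obtain ⟨κ, hκ, hratio⟩ := hinf
  have hgrowth : ∀ k, 1 ≤ k → κ * k * n k ≤ n (k + 1) := fun k hk ↦ by
    have := hratio k hk
    rwa [le_div_iff₀ (by have := hn k hk; positivity), ← mul_assoc] at this
  obtain ⟨K, hK, hdouble⟩ := exists_doubling_of_growth hκ hn hgrowth
  obtain ⟨α, hα⟩ := exists_tendsto_greedyApprox (ξ := ξ) hn hdouble
  refine ⟨max (1 / κ) K, by positivity, α, fun k hk ↦ ?_⟩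
  have hkpos : (0 : ℝ) < k := by exact_mod_cast hk
  have hnk := hn k hk
  rcases lt_or_ge k K with hkK | hKk
  · have : (k : ℝ) ≤ K := by exact_mod_cast hkK.le
    calc nd (α * n k - ξ k) ≤ 1 / 2 := nd_le_half _
      _ ≤ K / k := by rw [le_div_iff₀ hkpos]; linarith
      _ ≤ max (1 / κ) K / k := by gcongr; exact le_max_right _ _
  · calc nd (α * n k - ξ k) ≤ n k / n (k + 1) :=
          nd_mul_sub_le_div_of_tendsto_greedyApprox hn hdouble hα hk hKk
      _ ≤ n k / (κ * k * n k) := by gcongr; exact hgrowth k hk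
      _ = 1 / κ / k := by field_simp
      _ ≤ max (1 / κ) K / k := by gcongr; exact le_max_left _ _

theorem stmt5 (ξ : ℕ → ℝ) (hξ : ∀ k, 1 ≤ k → ξ k ∈ Set.Ico (0 : ℝ) 1)
    (n : ℕ → ℝ) (hn : ∀ k, 1 ≤ k → 0 < n k)
    (hinf : ∃ κ > (0 : ℝ), ∀ k, 1 ≤ k → κ ≤ n (k + 1) / (k * n k)) :
    ∃ c > (0 : ℝ), ∃ α : ℝ, ∀ k, 1 ≤ k → nd (α * n k - ξ k) ≤ c / k :=
  stmt5_general ξ n hn hinf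
end

section
/- There exists a real number α such that ‖α·k! − {φ k}‖ ≤ c/k for all k ≥ 1, for some constant c > 0, where φ = (1+√5)/2, {x} denotes the fractional part, and ‖x‖ the distance to the nearest integer. -/
open Finset Filter Topology
open scoped Nat

noncomputable def factorialApproxNum (ξ : ℕ → ℝ) : ℕ → ℤ
  | 0 => 0
  | k + 1 => ⌊(k + 1) * (factorialApproxNum ξ k + ξ k) - ξ (k + 1)⌋

noncomputable def factorialApprox (ξ : ℕ → ℝ) (k : ℕ) : ℝ :=
  (factorialApproxNum ξ k + ξ k) / k !

theorem dist_factorialApprox_succ_le (ξ : ℕ → ℝ) (k : ℕ) :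
    dist (factorialApprox ξ k) (factorialApprox ξ (k + 1)) ≤ 1 / (k + 1)! := by
  set y : ℝ := (k + 1) * (factorialApproxNum ξ k + ξ k) - ξ (k + 1)
  have hdiff : factorialApprox ξ k - factorialApprox ξ (k + 1) = Int.fract y / (k + 1)! := by
    simp only [factorialApprox, factorialApproxNum, Int.fract, y, Nat.factorial_succ, Nat.cast_mul]
    field_simp
    push_cast
    ring
  rw [Real.dist_eq, hdiff, abs_of_nonneg (by positivity)]
  gcongr
  exact (Int.fract_lt_one y).le

theorem one_div_factorial_succ_le {m : ℕ} (hm : 1 ≤ m) :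
    1 / ((m + 1)! : ℝ) ≤ 1 / (m ! * m) - 1 / ((m + 1)! * (m + 1 : ℕ)) := by
  rw [Nat.factorial_succ]
  push_cast
  rw [div_sub_div _ _ (by positivity) (by positivity), div_le_div_iff₀ (by positivity) (by positivity)]
  have hf : (0 : ℝ) < m ! := by positivity
  nlinarith [mul_pos (mul_pos hf hf) (by positivity : (0 : ℝ) < m + 1)]

theorem sum_range_one_div_factorial_le {k : ℕ} (hk : 1 ≤ k) (n : ℕ) :
    ∑ m ∈ range n, 1 / ((k + m + 1)! : ℝ) ≤ 1 / (k ! * k) - 1 / ((k + n)! * (k + n : ℕ)) := by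
  induction n with
  | zero => simp
  | succ n ih =>
    rw [sum_range_succ]
    have := one_div_factorial_succ_le (m := k + n) (by omega)
    rw [← add_assoc]
    linarith

theorem tsum_one_div_factorial_add_le {k : ℕ} (hk : 1 ≤ k) :
    ∑' m, 1 / ((k + m + 1)! : ℝ) ≤ 1 / (k ! * k) :=
  Real.tsum_le_of_sum_range_le (fun _ ↦ by positivity) fun n ↦
    (sum_range_one_div_factorial_le hk n).trans (sub_le_self _ (by positivity))

theorem summable_one_div_factorial_succ : Summable fun m : ℕ ↦ 1 / ((m + 1)! : ℝ) := by
  simpa using (summable_nat_add_iff 1).2 (Real.summable_pow_div_factorial 1)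

theorem exists_nd_mul_factorial_sub_le (ξ : ℕ → ℝ) :
    ∃ α : ℝ, ∀ k : ℕ, 1 ≤ k → nd (α * (k ! : ℝ) - ξ k) ≤ 1 / k := by
  obtain ⟨α, hα⟩ := cauchySeq_tendsto_of_complete <| cauchySeq_of_dist_le_of_summable _
    (dist_factorialApprox_succ_le ξ) summable_one_div_factorial_succ
  refine ⟨α, fun k hk ↦ ?_⟩
  have hdist : |α - factorialApprox ξ k| ≤ 1 / (k ! * k) := by
    rw [← Real.dist_eq, dist_comm]
    exact (dist_le_tsum_of_dist_le_of_tendsto _ (dist_factorialApprox_succ_le ξ)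
      summable_one_div_factorial_succ hα k).trans (tsum_one_div_factorial_add_le hk)
  have hf : (0 : ℝ) < k ! := by positivity
  calc nd (α * (k ! : ℝ) - ξ k) ≤ |α * (k ! : ℝ) - ξ k - factorialApproxNum ξ k| := round_le _ _
    _ = |(α - factorialApprox ξ k) * k !| := by
      rw [factorialApprox]
      congr 1
      field_simp
      ring
    _ = |α - factorialApprox ξ k| * k ! := by rw [abs_mul, abs_of_pos hf]
    _ ≤ 1 / k := by
      rw [← le_div_iff₀ hf, div_div, mul_comm]
      exact hdist

theorem stmt8 :
    ∃ c > (0 : ℝ), ∃ α : ℝ, ∀ k : ℕ, 1 ≤ k →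
      nd (α * Nat.factorial k - Int.fract (phi * k)) ≤ c / k :=
  ⟨1, one_pos, exists_nd_mul_factorial_sub_le fun k ↦ Int.fract (phi * k)⟩
end

section
/- Suppose a sequence of positive numbers (n_k)_{k≥1} satisfies inf_k n_{k+1}/(k n_k) > 0. Then there exists α ∈ ℝ and a constant M > 0 such that for every N ≥ 2, the discrepancy D_N of the finite sequence ({α n_k})_{1 ≤ k ≤ N} satisfies D_N ≤ M log N. -/
/-!
Compare `{α n_k}` with the van der Corput sequence `vanDerCorput k`, whose discrepancy is at most
`log₂ N + 1` since its first `2M` terms, doubled, are two copies of its first `M` terms.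
Because `n_{k+1} ≥ κ k n_k`, nested intervals give an `α` with
`α n_k ∈ vanDerCorput k + [0, 2 / (κ k)] (mod 1)` for every `k` with `2 / (κ k) < 1`.
Then `{α n_k} ≤ γ` and `vanDerCorput k ≤ γ` can only disagree when `vanDerCorput k` lies in
`[γ - 2 / (κ k), γ]` or `[1 - 2 / (κ k), 1]`. For `2^j ≤ k < 2^(j+1)` the numbers
`vanDerCorput k` are distinct multiples of `2^(-j-1)`, so each dyadic block of indices
contributes `O(1/κ)` such `k`, and there are `log₂ N + 1` blocks.
-/

open Finset

lemma card_filter_mem_Icc_le_of_injOn {ι : Type*} {s : Finset ι} {x : ι → ℝ} {q : ℝ}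
    (hq : 0 < q) (hx : ∀ i ∈ s, ∃ m : ℤ, x i = m / q) (hinj : Set.InjOn x s) {a b : ℝ}
    (hab : a ≤ b) :
    (#{i ∈ s | x i ∈ Set.Icc a b} : ℝ) ≤ (b - a) * q + 1 := by
  have hfloor : ∀ i ∈ s, (⌊x i * q⌋ : ℝ) = x i * q := fun i hi ↦ by
    obtain ⟨m, hm⟩ := hx i hi
    rw [hm, div_mul_cancel₀ _ hq.ne', Int.floor_intCast]
  have hcard : #{i ∈ s | x i ∈ Set.Icc a b} ≤ #(Icc ⌈a * q⌉ ⌊b * q⌋) := by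
    refine card_le_card_of_injOn (fun i ↦ ⌊x i * q⌋) (fun i hi ↦ ?_)
      (fun i hi j hj hij ↦ ?_)
    · simp only [coe_filter, Set.mem_ofPred_eq, Set.mem_Icc] at hi
      simp only [coe_Icc, Set.mem_Icc]
      exact ⟨Int.ceil_le.mpr ((hfloor i hi.1).symm ▸ mul_le_mul_of_nonneg_right hi.2.1 hq.le),
        Int.floor_mono (mul_le_mul_of_nonneg_right hi.2.2 hq.le)⟩
    · simp only [coe_filter, Set.mem_ofPred_eq] at hi hj
      have : x i * q = x j * q := by
        rw [← hfloor i hi.1, ← hfloor j hj.1]; exact_mod_cast hij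
      exact hinj hi.1 hj.1 (mul_right_cancel₀ hq.ne' this)
  have hceil : ⌈a * q⌉ ≤ ⌊b * q⌋ + 1 := by
    have : a * q ≤ b * q := mul_le_mul_of_nonneg_right hab hq.le
    have : (⌈a * q⌉ : ℝ) < ⌊b * q⌋ + 2 := by
      linarith [Int.ceil_lt_add_one (a * q), Int.lt_floor_add_one (b * q)]
    have : ⌈a * q⌉ < ⌊b * q⌋ + 2 := by exact_mod_cast this
    omega
  calc (#{i ∈ s | x i ∈ Set.Icc a b} : ℝ) ≤ #(Icc ⌈a * q⌉ ⌊b * q⌋) := mod_cast hcard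
    _ = ((⌊b * q⌋ + 1 - ⌈a * q⌉ : ℤ) : ℝ) := by
      rw [Int.card_Icc, ← Int.cast_natCast, Int.toNat_of_nonneg (by omega)]
    _ ≤ (b - a) * q + 1 := by
      push_cast; linarith [Int.floor_le (b * q), Int.le_ceil (a * q)]

lemma abs_card_filter_sub_card_filter_le {ι : Type*} (s : Finset ι) (p q : ι → Prop)
    [DecidablePred p] [DecidablePred q] :
    |(#{i ∈ s | p i} : ℝ) - #{i ∈ s | q i}| ≤ #{i ∈ s | ¬(p i ↔ q i)} := by
  simp only [natCast_card_filter, ← sum_sub_distrib]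
  refine (abs_sum_le_sum_abs _ _).trans (sum_le_sum fun i _ ↦ ?_)
  by_cases hp : p i <;> by_cases hq : q i <;> simp [hp, hq]

lemma Nat.log_add_one_le_log_add_one {b : ℕ} (hb : 1 < b) (n : ℕ) :
    Nat.log b (n + 1) ≤ Nat.log b n + 1 := by
  rcases eq_or_ne n 0 with rfl | hn
  · simp
  · rw [← Nat.log_mul_base hb hn]
    exact Nat.log_mono_right (by nlinarith [Nat.one_le_iff_ne_zero.mpr hn])

lemma natLog_mul_log_le_log {b : ℕ} (hb : 1 < b) (n : ℕ) :
    Nat.log b n * Real.log b ≤ Real.log n := by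
  have := Real.natLog_le_logb n b
  rwa [Real.logb, le_div_iff₀ (Real.log_pos (by exact_mod_cast hb))] at this

/-- The least `x ≥ a` with `x * f - v ∈ ℤ` (for `f > 0`). -/
noncomputable def latticeCeil (f v a : ℝ) : ℝ := (v + ⌈a * f - v⌉) / f

lemma le_latticeCeil {f : ℝ} (hf : 0 < f) (v a : ℝ) : a ≤ latticeCeil f v a := by
  rw [latticeCeil, le_div_iff₀ hf]
  linarith [Int.le_ceil (a * f - v)]

lemma latticeCeil_lt {f : ℝ} (hf : 0 < f) (v a : ℝ) : latticeCeil f v a < a + 1 / f := by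
  rw [latticeCeil, div_lt_iff₀ hf, add_mul, one_div_mul_cancel hf.ne']
  linarith [Int.ceil_lt_add_one (a * f - v)]

lemma latticeCeil_mul_sub {f : ℝ} (hf : f ≠ 0) (v a : ℝ) :
    latticeCeil f v a * f - v = ⌈a * f - v⌉ := by
  rw [latticeCeil, div_mul_cancel₀ _ hf, add_sub_cancel_left]

noncomputable def greedyLatticeSeq (f v : ℕ → ℝ) : ℕ → ℝ
  | 0 => latticeCeil (f 0) (v 0) 0
  | k + 1 => latticeCeil (f (k + 1)) (v (k + 1)) (greedyLatticeSeq f v k)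

theorem exists_forall_mul_sub_mem_Icc (f v δ : ℕ → ℝ) (hf : ∀ k, 0 < f k) (hδ : ∀ k, 0 ≤ δ k)
    (hnest : ∀ k, (1 + δ (k + 1)) / f (k + 1) ≤ δ k / f k) :
    ∃ α : ℝ, ∀ k, ∃ m : ℤ, α * f k - v k - m ∈ Set.Icc 0 (δ k) := by
  set a := greedyLatticeSeq f v
  set b := fun k ↦ a k + δ k / f k
  have hint : ∀ k, ∃ m : ℤ, a k * f k - v k = m := by
    intro k
    cases k <;> exact ⟨_, latticeCeil_mul_sub (hf _).ne' _ _⟩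
  have hmono : Monotone a := monotone_nat_of_le_succ fun k ↦ le_latticeCeil (hf _) _ _
  have hanti : Antitone b := antitone_nat_of_succ_le fun k ↦ by
    have hlt : a (k + 1) < a k + 1 / f (k + 1) := latticeCeil_lt (hf _) _ _
    have := hnest k
    rw [add_div] at this
    simp only [b]
    linarith
  have hab : ∀ j k, a j ≤ b k := fun j k ↦
    (hmono (le_max_left j k)).trans <|
      (le_add_of_nonneg_right (div_nonneg (hδ _) (hf _).le)).trans (hanti (le_max_right j k))
  have hbdd : BddAbove (Set.range a) := ⟨b 0, by rintro _ ⟨j, rfl⟩; exact hab j 0⟩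
  refine ⟨⨆ j, a j, fun k ↦ ?_⟩
  obtain ⟨m, hm⟩ := hint k
  have hlo : a k ≤ ⨆ j, a j := le_ciSup hbdd k
  have hhi : ⨆ j, a j ≤ a k + δ k / f k := ciSup_le fun j ↦ hab j k
  refine ⟨m, ?_⟩
  rw [show (⨆ j, a j) * f k - v k - m = ((⨆ j, a j) - a k) * f k by rw [← hm]; ring]
  exact ⟨mul_nonneg (sub_nonneg.mpr hlo) (hf k).le, (le_div_iff₀ (hf k)).mp (by linarith)⟩

theorem exists_forall_mul_sub_mem_Icc_of_ratio_ge (n v : ℕ → ℝ) (hn : ∀ k, 1 ≤ k → 0 < n k)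
    {κ : ℝ} (hκ : 0 < κ) (hratio : ∀ k, 1 ≤ k → κ ≤ n (k + 1) / (k * n k)) :
    ∃ α : ℝ, ∀ k : ℕ, 1 ≤ k → 2 / κ / k < 1 →
      ∃ m : ℤ, α * n k - v k - m ∈ Set.Icc 0 (2 / κ / k) := by
  -- Nesting needs `2 / (κ (k + 1)) ≤ 1`, so the intervals start at index `K`.
  set K := ⌈2 / κ⌉₊
  have hK : 1 ≤ K := Nat.ceil_pos.mpr (by positivity)
  have hKκ : 2 / κ ≤ K := Nat.le_ceil _
  have hnest : ∀ k, K ≤ k → (1 + 2 / κ / (k + 1 : ℕ)) / n (k + 1) ≤ 2 / κ / k / n k := by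
    intro k hk
    have hk1 : (1 : ℝ) ≤ k := by exact_mod_cast hK.trans hk
    have hnk := hn k (hK.trans hk)
    have hgrowth : κ * k * n k ≤ n (k + 1) := by
      have := hratio k (hK.trans hk)
      rwa [le_div_iff₀ (by positivity), ← mul_assoc] at this
    have hδ : 2 / κ / (k + 1 : ℕ) ≤ 1 := by
      rw [div_le_one (by positivity)]
      push_cast
      linarith [(Nat.cast_le.mpr hk : (K : ℝ) ≤ k)]
    calc (1 + 2 / κ / (k + 1 : ℕ)) / n (k + 1) ≤ 2 / n (k + 1) := by
          exact div_le_div_of_nonneg_right (by linarith) (hn _ (by omega)).le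
      _ ≤ 2 / (κ * k * n k) := by gcongr
      _ = 2 / κ / k / n k := by field_simp
  obtain ⟨α, hα⟩ := exists_forall_mul_sub_mem_Icc (fun i ↦ n (i + K)) (fun i ↦ v (i + K))
    (fun i ↦ 2 / κ / (i + K : ℕ)) (fun i ↦ hn _ (by omega)) (fun i ↦ by positivity)
    (fun i ↦ by simpa only [add_right_comm i 1 K] using hnest (i + K) (by omega))
  refine ⟨α, fun k hk hsmall ↦ ?_⟩
  have hKk : K ≤ k := Nat.ceil_le.mpr <| by
    rw [div_lt_one (by positivity)] at hsmall
    exact hsmall.le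
  simpa only [Nat.sub_add_cancel hKk] using hα (k - K)

noncomputable def vanDerCorput (n : ℕ) : ℝ :=
  if n = 0 then 0 else vanDerCorput (n / 2) / 2 + (n % 2 : ℕ) / 2
decreasing_by omega

@[simp] lemma vanDerCorput_zero : vanDerCorput 0 = 0 := by
  rw [vanDerCorput, if_pos rfl]

lemma vanDerCorput_eq_div_two (n : ℕ) :
    vanDerCorput n = vanDerCorput (n / 2) / 2 + (n % 2 : ℕ) / 2 := by
  rcases eq_or_ne n 0 with rfl | hn
  · simp
  · rw [vanDerCorput, if_neg hn]

lemma vanDerCorput_two_mul (n : ℕ) : vanDerCorput (2 * n) = vanDerCorput n / 2 := by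
  rw [vanDerCorput_eq_div_two]; simp

lemma vanDerCorput_two_mul_add_one (n : ℕ) :
    vanDerCorput (2 * n + 1) = vanDerCorput n / 2 + 1 / 2 := by
  rw [vanDerCorput_eq_div_two, show (2 * n + 1) / 2 = n by omega,
    show (2 * n + 1) % 2 = 1 by omega, Nat.cast_one]

lemma vanDerCorput_mem_Ico (n : ℕ) : vanDerCorput n ∈ Set.Ico 0 1 := by
  induction n using Nat.strong_induction_on with
  | _ n ih =>
    rcases eq_or_ne n 0 with rfl | hn
    · simp
    obtain ⟨h0, h1⟩ := ih (n / 2) (by omega)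
    have hbit : ((n % 2 : ℕ) : ℝ) ≤ 1 := by exact_mod_cast Nat.le_of_lt_succ (Nat.mod_lt n two_pos)
    rw [vanDerCorput_eq_div_two]
    constructor <;> [positivity; linarith]

lemma vanDerCorput_nonneg (n : ℕ) : 0 ≤ vanDerCorput n := (vanDerCorput_mem_Ico n).1

lemma vanDerCorput_lt_one (n : ℕ) : vanDerCorput n < 1 := (vanDerCorput_mem_Ico n).2

lemma two_mul_vanDerCorput (n : ℕ) :
    2 * vanDerCorput n = vanDerCorput (n / 2) + (n % 2 : ℕ) := by
  rw [vanDerCorput_eq_div_two n]; ring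

lemma floor_two_mul_vanDerCorput (n : ℕ) : ⌊2 * vanDerCorput n⌋ = (n % 2 : ℕ) := by
  rw [two_mul_vanDerCorput, Int.floor_add_natCast,
    Int.floor_eq_zero_iff.mpr (vanDerCorput_mem_Ico _), zero_add]

lemma fract_two_mul_vanDerCorput (n : ℕ) :
    Int.fract (2 * vanDerCorput n) = vanDerCorput (n / 2) := by
  rw [two_mul_vanDerCorput, Int.fract_add_natCast, Int.fract_eq_self.mpr (vanDerCorput_mem_Ico _)]

lemma vanDerCorput_injective : Function.Injective vanDerCorput := by
  suffices ∀ s a b, a + b = s → vanDerCorput a = vanDerCorput b → a = b from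
    fun a b ↦ this _ a b rfl
  intro s
  induction s using Nat.strong_induction_on with
  | _ s ih =>
    intro a b hs hab
    have hmod : a % 2 = b % 2 := by
      exact_mod_cast
        (floor_two_mul_vanDerCorput a).symm.trans (hab ▸ floor_two_mul_vanDerCorput b)
    have hdiv : vanDerCorput (a / 2) = vanDerCorput (b / 2) := by
      rw [← fract_two_mul_vanDerCorput, hab, fract_two_mul_vanDerCorput]
    rcases Nat.eq_zero_or_pos s with rfl | hpos
    · omega
    have := ih (a / 2 + b / 2) (by omega) _ _ rfl hdiv
    omega

lemma exists_vanDerCorput_eq_div_two_pow {j k : ℕ} (hk : k < 2 ^ j) :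
    ∃ m : ℤ, vanDerCorput k = m / 2 ^ j := by
  induction j generalizing k with
  | zero => exact ⟨0, by simp [Nat.lt_one_iff.mp (by simpa using hk)]⟩
  | succ j ih =>
    obtain ⟨m, hm⟩ := ih (k := k / 2) (by rw [pow_succ] at hk; omega)
    refine ⟨m + (k % 2 : ℕ) * 2 ^ j, ?_⟩
    rw [vanDerCorput_eq_div_two, hm]
    simp only [Int.cast_add, Int.cast_mul, Int.cast_natCast, Int.cast_pow, Int.cast_ofNat]
    field_simp
    ring

lemma card_filter_vanDerCorput_le_range_two_mul (N : ℕ) (γ : ℝ) :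
    #{k ∈ range (2 * N) | vanDerCorput k ≤ γ} =
      #{k ∈ range N | vanDerCorput k ≤ 2 * γ} +
        #{k ∈ range N | vanDerCorput k ≤ 2 * γ - 1} := by
  induction N with
  | zero => simp
  | succ N ih =>
    have heven : vanDerCorput (2 * N) ≤ γ ↔ vanDerCorput N ≤ 2 * γ := by
      rw [vanDerCorput_two_mul]; constructor <;> intro <;> linarith
    have hodd : vanDerCorput (2 * N + 1) ≤ γ ↔ vanDerCorput N ≤ 2 * γ - 1 := by
      rw [vanDerCorput_two_mul_add_one]; constructor <;> intro <;> linarith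
    simp only [card_filter] at ih ⊢
    rw [show 2 * (N + 1) = 2 * N + 1 + 1 by ring, sum_range_succ, sum_range_succ, ih,
      sum_range_succ, sum_range_succ, if_congr heven rfl rfl, if_congr hodd rfl rfl]
    ring

noncomputable def localDiscrepancy (x : ℕ → ℝ) (N : ℕ) (γ : ℝ) : ℝ :=
  N * γ - #{k ∈ range N | x k ≤ γ}

lemma abs_localDiscrepancy_succ_sub_le (x : ℕ → ℝ) (N : ℕ) {γ : ℝ} (hγ : γ ∈ Set.Icc 0 1) :
    |localDiscrepancy x (N + 1) γ - localDiscrepancy x N γ| ≤ 1 := by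
  simp only [localDiscrepancy, natCast_card_filter, sum_range_succ]
  rw [abs_le]
  split_ifs <;> push_cast <;> constructor <;> linarith [hγ.1, hγ.2]

lemma exists_localDiscrepancy_vanDerCorput_two_mul (N : ℕ) {γ : ℝ} (hγ : γ ∈ Set.Ico 0 1) :
    ∃ γ' ∈ Set.Ico 0 1,
      localDiscrepancy vanDerCorput (2 * N) γ = localDiscrepancy vanDerCorput N γ' := by
  obtain ⟨hγ0, hγ1⟩ := hγ
  simp only [localDiscrepancy, card_filter_vanDerCorput_le_range_two_mul]
  rcases lt_or_ge γ (1 / 2) with hγ2 | hγ2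
  · have hnone : #{k ∈ range N | vanDerCorput k ≤ 2 * γ - 1} = 0 := by
      rw [card_eq_zero, filter_eq_empty_iff]
      exact fun k _ ↦ by linarith [vanDerCorput_nonneg k]
    refine ⟨2 * γ, ⟨by linarith, by linarith⟩, ?_⟩
    rw [hnone]; push_cast; ring
  · have hall : #{k ∈ range N | vanDerCorput k ≤ 2 * γ} = N := by
      rw [filter_true_of_mem fun k _ ↦ by linarith [vanDerCorput_lt_one k], card_range]
    refine ⟨2 * γ - 1, ⟨by linarith, by linarith⟩, ?_⟩
    rw [hall]; push_cast; ring

theorem abs_localDiscrepancy_vanDerCorput_le (N : ℕ) {γ : ℝ} (hγ : γ ∈ Set.Ico 0 1) :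
    |localDiscrepancy vanDerCorput N γ| ≤ Nat.log 2 N + 1 := by
  induction N using Nat.strong_induction_on generalizing γ with
  | _ N ih =>
    obtain ⟨γ', hγ', hdouble⟩ := exists_localDiscrepancy_vanDerCorput_two_mul (N / 2) hγ
    have hhalf : |localDiscrepancy vanDerCorput (N / 2) γ'| ≤ Nat.log 2 N := by
      rcases lt_or_ge N 2 with hN | hN
      · simp [localDiscrepancy, Nat.div_eq_of_lt hN]
      · rw [Nat.log_of_one_lt_of_le one_lt_two hN]
        exact_mod_cast ih (N / 2) (by omega) hγ'
    have hparity : |localDiscrepancy vanDerCorput N γ| ≤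
        |localDiscrepancy vanDerCorput (2 * (N / 2)) γ| + 1 := by
      rcases Nat.even_or_odd' N with ⟨M, rfl | rfl⟩
      · rw [Nat.mul_div_cancel_left M two_pos]; linarith
      · rw [show (2 * M + 1) / 2 = M by omega]
        have := abs_localDiscrepancy_succ_sub_le vanDerCorput (2 * M)
          (Set.Ico_subset_Icc_self hγ)
        linarith [abs_sub_abs_le_abs_sub (localDiscrepancy vanDerCorput (2 * M + 1) γ)
          (localDiscrepancy vanDerCorput (2 * M) γ)]
    rw [hdouble] at hparity
    linarith

lemma abs_mul_sub_card_vanDerCorput_le (N : ℕ) {γ : ℝ} (hγ : γ ∈ Set.Ico 0 1) :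
    |N * γ - #{k ∈ Icc 1 N | vanDerCorput k ≤ γ}| ≤ Nat.log 2 N + 3 := by
  have hcount : #{k ∈ range (N + 1) | vanDerCorput k ≤ γ} =
      #{k ∈ Icc 1 N | vanDerCorput k ≤ γ} + 1 := by
    rw [Nat.range_succ_eq_Icc_zero, ← insert_Icc_add_one_left_eq_Icc (Nat.zero_le N),
      filter_insert, if_pos (by simpa using hγ.1), card_insert_of_notMem (by simp), zero_add]
  have hdisc := abs_localDiscrepancy_vanDerCorput_le (N + 1) hγ
  have hlog : (Nat.log 2 (N + 1) : ℝ) ≤ Nat.log 2 N + 1 :=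
    mod_cast Nat.log_add_one_le_log_add_one one_lt_two N
  rw [localDiscrepancy, hcount] at hdisc
  push_cast at hdisc
  have hrest : |1 - γ| ≤ 1 := abs_le.mpr ⟨by linarith [hγ.2], by linarith [hγ.1]⟩
  calc |N * γ - #{k ∈ Icc 1 N | vanDerCorput k ≤ γ}|
      = |((N + 1) * γ - (#{k ∈ Icc 1 N | vanDerCorput k ≤ γ} + 1)) + (1 - γ)| := by ring_nf
    _ ≤ Nat.log 2 N + 3 := by
      linarith [abs_add_le ((N + 1) * γ - (#{k ∈ Icc 1 N | vanDerCorput k ≤ γ} + 1 : ℝ)) (1 - γ)]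

lemma card_range_two_pow_vanDerCorput_mem_Icc_le (j : ℕ) (a : ℝ) {c : ℝ} (hc : 0 ≤ c) :
    (#{k ∈ range (2 ^ (j + 1)) | vanDerCorput k ∈ Set.Icc (a - c / 2 ^ j) a} : ℝ) ≤
      2 * c + 1 := by
  have hgrid := card_filter_mem_Icc_le_of_injOn (s := range (2 ^ (j + 1))) (q := 2 ^ (j + 1))
    (by positivity) (fun k hk ↦ mod_cast exists_vanDerCorput_eq_div_two_pow (mem_range.mp hk))
    vanDerCorput_injective.injOn (a := a - c / 2 ^ j) (b := a)
    (sub_le_self a (by positivity))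
  convert hgrid using 2
  field_simp
  ring

lemma card_vanDerCorput_mem_Icc_sub_div_le (N : ℕ) (a : ℝ) {c : ℝ} (hc : 0 ≤ c) :
    (#{k ∈ Icc 1 N | vanDerCorput k ∈ Set.Icc (a - c / (k : ℕ)) a} : ℝ) ≤
      (2 * c + 1) * (Nat.log 2 N + 1) := by
  rw [card_eq_sum_card_fiberwise (f := Nat.log 2) (t := range (Nat.log 2 N + 1)) fun k hk ↦ by
    simpa [Nat.lt_succ_iff] using Nat.log_mono_right (mem_Icc.mp (mem_filter.mp hk).1).2]
  push_cast
  calc _ ≤ ∑ j ∈ range (Nat.log 2 N + 1), (2 * c + 1) := by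
        refine sum_le_sum fun j _ ↦ le_trans ?_ (card_range_two_pow_vanDerCorput_mem_Icc_le j a hc)
        refine mod_cast card_le_card fun k hk ↦ ?_
        simp only [mem_filter, mem_Icc, Set.mem_Icc, mem_range, Nat.cast_pow, Nat.cast_ofNat]
          at hk ⊢
        obtain ⟨⟨⟨hk1, -⟩, hlo, hhi⟩, rfl⟩ := hk
        have hpow : (2 : ℝ) ^ Nat.log 2 k ≤ k := mod_cast Nat.pow_log_le_self 2 (by omega)
        refine ⟨Nat.lt_pow_succ_log_self one_lt_two k, ?_, hhi⟩
        linarith [div_le_div_of_nonneg_left hc (by positivity) hpow]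
    _ = (2 * c + 1) * (Nat.log 2 N + 1) := by
        rw [sum_const, card_range, nsmul_eq_mul]; push_cast; ring

lemma fract_le_iff_or_mem_Icc {x v γ δ : ℝ} (hv : v ∈ Set.Ico 0 1) {m : ℤ}
    (hx : x - v - m ∈ Set.Icc 0 δ) :
    (Int.fract x ≤ γ ↔ v ≤ γ) ∨ v ∈ Set.Icc (γ - δ) γ ∨ v ∈ Set.Icc (1 - δ) 1 := by
  obtain ⟨hx0, hxδ⟩ := hx
  rcases lt_or_ge (x - m) 1 with hlt | hge
  · have hfract : Int.fract x = x - m :=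
      Int.fract_eq_iff.mpr ⟨by linarith [hv.1], hlt, m, by ring⟩
    rw [hfract]
    by_cases hvγ : v ≤ γ
    · by_cases hxγ : x - m ≤ γ
      · exact Or.inl (iff_of_true hxγ hvγ)
      · exact Or.inr (Or.inl ⟨by linarith, hvγ⟩)
    · exact Or.inl (iff_of_false (by linarith) hvγ)
  · exact Or.inr (Or.inr ⟨by linarith, hv.2.le⟩)

lemma abs_card_fract_sub_card_vanDerCorput_le (x : ℕ → ℝ) {c : ℝ} (hc : 0 ≤ c)
    (hx : ∀ k : ℕ, 1 ≤ k → c / k < 1 → ∃ m : ℤ, x k - vanDerCorput k - m ∈ Set.Icc 0 (c / k))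
    (N : ℕ) (γ : ℝ) :
    |(#{k ∈ Icc 1 N | Int.fract (x k) ≤ γ} : ℝ) - #{k ∈ Icc 1 N | vanDerCorput k ≤ γ}| ≤
      2 * ((2 * c + 1) * (Nat.log 2 N + 1)) := by
  have hmismatch : {k ∈ Icc 1 N | ¬(Int.fract (x k) ≤ γ ↔ vanDerCorput k ≤ γ)} ⊆
      {k ∈ Icc 1 N | vanDerCorput k ∈ Set.Icc (γ - c / k) γ} ∪
        {k ∈ Icc 1 N | vanDerCorput k ∈ Set.Icc (1 - c / k) 1} := by
    intro k hk
    obtain ⟨hkN, hdiff⟩ := mem_filter.mp hk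
    simp only [mem_union, mem_filter, hkN, true_and]
    rcases lt_or_ge (c / k) 1 with hsmall | hlarge
    · obtain ⟨m, hm⟩ := hx k (mem_Icc.mp hkN).1 hsmall
      exact (fract_le_iff_or_mem_Icc (vanDerCorput_mem_Ico k) hm).resolve_left hdiff
    · exact Or.inr ⟨by linarith [vanDerCorput_nonneg k], (vanDerCorput_lt_one k).le⟩
  calc _ ≤ (#{k ∈ Icc 1 N | ¬(Int.fract (x k) ≤ γ ↔ vanDerCorput k ≤ γ)} : ℝ) :=
        abs_card_filter_sub_card_filter_le _ _ _
    _ ≤ #{k ∈ Icc 1 N | vanDerCorput k ∈ Set.Icc (γ - c / (k : ℕ)) γ} +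
          #{k ∈ Icc 1 N | vanDerCorput k ∈ Set.Icc (1 - c / (k : ℕ)) 1} :=
        mod_cast (card_le_card hmismatch).trans (card_union_le _ _)
    _ ≤ 2 * ((2 * c + 1) * (Nat.log 2 N + 1)) := by
        linarith [card_vanDerCorput_mem_Icc_sub_div_le N γ hc,
          card_vanDerCorput_mem_Icc_sub_div_le N 1 hc]

theorem stmt11 (n : ℕ → ℝ) (hn : ∀ k, 1 ≤ k → 0 < n k)
    (hinf : ∃ κ > (0 : ℝ), ∀ k, 1 ≤ k → κ ≤ n (k + 1) / (k * n k)) :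
    ∃ (α : ℝ) (M : ℝ), 0 < M ∧ ∀ N : ℕ, 2 ≤ N →
      ∀ γ ∈ Set.Ico (0 : ℝ) 1,
        |(N : ℝ) * γ -
          ((Finset.Icc 1 N).filter (fun k => Int.fract (α * n k) ≤ γ)).card| ≤
          M * Real.log N := by
  obtain ⟨κ, hκ, hratio⟩ := hinf
  obtain ⟨α, hα⟩ := exists_forall_mul_sub_mem_Icc_of_ratio_ge n vanDerCorput hn hκ hratio
  have hc : 0 ≤ 2 / κ := by positivity
  refine ⟨α, (8 * (2 / κ) + 8) / Real.log 2, by positivity, fun N hN γ hγ ↦ ?_⟩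
  have hvdc := abs_mul_sub_card_vanDerCorput_le N hγ
  have hcompare := abs_card_fract_sub_card_vanDerCorput_le (fun k ↦ α * n k) hc hα N γ
  have hL : (1 : ℝ) ≤ Nat.log 2 N := mod_cast Nat.log_pos one_lt_two hN
  have hlog : Nat.log 2 N * Real.log 2 ≤ Real.log N :=
    mod_cast natLog_mul_log_le_log one_lt_two N
  rw [abs_sub_comm] at hcompare
  calc _ ≤ |N * γ - #{k ∈ Icc 1 N | vanDerCorput k ≤ γ}| +
        |(#{k ∈ Icc 1 N | vanDerCorput k ≤ γ} : ℝ) - #{k ∈ Icc 1 N | Int.fract (α * n k) ≤ γ}| :=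
        abs_sub_le _ _ _
    _ ≤ (8 * (2 / κ) + 8) * Nat.log 2 N := by nlinarith
    _ ≤ (8 * (2 / κ) + 8) / Real.log 2 * Real.log N := by
        rw [div_mul_eq_mul_div, le_div_iff₀ (Real.log_pos one_lt_two), mul_assoc]
        gcongr
end
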